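/- arXiv:1007.5234 — 5 statements merged into one kernel-verified Lean document; each statement's English description precedes it below -/
import Mathlib

section
/- Let T, A be bounded linear operators on a complex Hilbert space H, f a unit vector with Af ≠ 0, λ = (Tf,Af)/(Af,Af), h = Tf - λAf. If (T* - λ̄A*)(T - λA)f = ‖h‖²·f, then (T*h, A*h) = λ̄·(A*h, A*h). -/
open scoped InnerProductSpace
open ContinuousLinearMap

/-- stationarity implies (T*h, A*h) = λ̄(A*h, A*h). -/
theorem stmt_2 {H : Type*} [NormedAddCommGroup H] [InnerProductSpace ℂ H] [CompleteSpace H]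
    (T A : H →L[ℂ] H) (f : H) (hf : ‖f‖ = 1) (hAf : A f ≠ 0)
    (lam : ℂ) (hlam : lam = ⟪A f, T f⟫_ℂ / ⟪A f, A f⟫_ℂ)
    (h : H) (hh : h = T f - lam • A f)
    (hstat : (adjoint T - (starRingEnd ℂ lam) • adjoint A) ((T - lam • A) f)
      = ((‖h‖ : ℂ) ^ 2) • f) :
    ⟪adjoint A h, adjoint T h⟫_ℂ
      = (starRingEnd ℂ lam) * ⟪adjoint A h, adjoint A h⟫_ℂ := by
  have hAA : ⟪A f, A f⟫_ℂ ≠ 0 := by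
    simpa [inner_self_eq_zero] using hAf
  have hconj : (starRingEnd ℂ) ⟪A f, A f⟫_ℂ = ⟪A f, A f⟫_ℂ := inner_conj_symm _ _
  have hkey : ⟪h, A f⟫_ℂ = 0 := by
    rw [hh, inner_sub_left, inner_smul_left, hlam, map_div₀, inner_conj_symm, hconj,
      div_mul_cancel₀ _ hAA, sub_self]
  have h2 : (T - lam • A) f = h := by simp [hh, sub_apply, smul_apply]
  rw [h2] at hstat
  have hstat' : adjoint T h - (starRingEnd ℂ lam) • adjoint A h = ((‖h‖ : ℂ) ^ 2) • f := by
    simpa [sub_apply, smul_apply] using hstat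
  rw [← sub_eq_zero, ← inner_smul_right, ← inner_sub_right, hstat', inner_smul_right,
    adjoint_inner_left, hkey, mul_zero]
end

section
/- Let T, A be bounded linear operators on a complex Hilbert space H, f a unit vector with Af ≠ 0, λ = (Tf,Af)/(Af,Af), h = Tf - λAf, h ≠ 0. If (T* - λ̄A*)(T - λA)f = ‖h‖²·f, then ‖T*h‖² = |λ|²‖A*h‖² + ‖h‖⁴. -/
/-!
The choice of `λ` makes `h = (T - λA) f` orthogonal to `A f`, so `A* h ⟂ f`. Stationarity reads
`T* h = λ̄ A* h + ‖h‖² f`, and Pythagoras on this orthogonal decomposition gives the identity.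
-/

open scoped InnerProductSpace
open ContinuousLinearMap

section

variable {𝕜 E : Type*} [RCLike 𝕜] [NormedAddCommGroup E] [InnerProductSpace 𝕜 E]

theorem inner_sub_inner_div_inner_self_smul_eq_zero {u : E} (hu : u ≠ 0) (v : E) :
    ⟪u, v - (⟪u, v⟫_𝕜 / ⟪u, u⟫_𝕜) • u⟫_𝕜 = 0 := by
  rw [inner_sub_right, inner_smul_right, div_mul_cancel₀ _ (inner_self_ne_zero.mpr hu), sub_self]

theorem norm_adjoint_apply_sq_of_stationary [CompleteSpace E] {T A : E →L[𝕜] E} {μ c : 𝕜}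
    {f h : E} (horth : ⟪A f, h⟫_𝕜 = 0)
    (hstat : (adjoint T - starRingEnd 𝕜 μ • adjoint A) h = c • f) :
    ‖adjoint T h‖ ^ 2 = ‖μ‖ ^ 2 * ‖adjoint A h‖ ^ 2 + ‖c‖ ^ 2 * ‖f‖ ^ 2 := by
  have hdecomp : adjoint T h = starRingEnd 𝕜 μ • adjoint A h + c • f := by
    rw [← hstat, sub_apply, smul_apply, add_sub_cancel]
  have hperp : ⟪starRingEnd 𝕜 μ • adjoint A h, c • f⟫_𝕜 = 0 := by
    rw [inner_smul_left, inner_smul_right, adjoint_inner_left, ← inner_conj_symm, horth,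
      map_zero, mul_zero, mul_zero]
  rw [hdecomp, sq, norm_add_sq_eq_norm_sq_add_norm_sq_of_inner_eq_zero _ _ hperp, norm_smul,
    norm_smul, RCLike.norm_conj]
  ring

end

theorem stmt_3_general {H : Type*} [NormedAddCommGroup H] [InnerProductSpace ℂ H] [CompleteSpace H]
    (T A : H →L[ℂ] H) (f : H) (hf : ‖f‖ = 1) (hAf : A f ≠ 0)
    (lam : ℂ) (hlam : lam = ⟪A f, T f⟫_ℂ / ⟪A f, A f⟫_ℂ)
    (h : H) (hh : h = T f - lam • A f)
    (hstat : (adjoint T - (starRingEnd ℂ lam) • adjoint A) ((T - lam • A) f)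
      = ((‖h‖ : ℂ) ^ 2) • f) :
    ‖adjoint T h‖ ^ 2 = ‖lam‖ ^ 2 * ‖adjoint A h‖ ^ 2 + ‖h‖ ^ 4 := by
  have horth : ⟪A f, h⟫_ℂ = 0 := by
    rw [hh, hlam]
    exact inner_sub_inner_div_inner_self_smul_eq_zero hAf (T f)
  have hTf : (T - lam • A) f = h := by
    rw [hh, sub_apply, smul_apply]
  rw [hTf] at hstat
  rw [norm_adjoint_apply_sq_of_stationary horth hstat, hf]
  norm_num [← pow_mul]

/-- stationarity implies ‖T*h‖² = |λ|²‖A*h‖² + ‖h‖⁴. -/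
theorem stmt_3 {H : Type*} [NormedAddCommGroup H] [InnerProductSpace ℂ H] [CompleteSpace H]
    (T A : H →L[ℂ] H) (f : H) (hf : ‖f‖ = 1) (hAf : A f ≠ 0)
    (lam : ℂ) (hlam : lam = ⟪A f, T f⟫_ℂ / ⟪A f, A f⟫_ℂ)
    (h : H) (hh : h = T f - lam • A f) (hhne : h ≠ 0)
    (hstat : (adjoint T - (starRingEnd ℂ lam) • adjoint A) ((T - lam • A) f)
      = ((‖h‖ : ℂ) ^ 2) • f) :
    ‖adjoint T h‖ ^ 2 = ‖lam‖ ^ 2 * ‖adjoint A h‖ ^ 2 + ‖h‖ ^ 4 :=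
  stmt_3_general T A f hf hAf lam hlam h hh hstat
end

section
/- Let T be a bounded linear operator on a complex Hilbert space H and {fₙ} a sequence of unit vectors with ‖Tfₙ‖ → ‖T‖ and fₙ ⇀ f weakly with f ≠ 0. Then ‖Tf‖ = ‖T‖·‖f‖, i.e. the operator norm of T is attained at the unit vector f/‖f‖. -/
open scoped InnerProductSpace
open Filter

/-- if ‖Tfₙ‖ → ‖T‖ and fₙ ⇀ f ≠ 0 weakly then ‖T‖ is attained at f/‖f‖. -/
theorem stmt_7 {H : Type*} [NormedAddCommGroup H] [InnerProductSpace ℂ H] [CompleteSpace H]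
    (T : H →L[ℂ] H) (f : ℕ → H) (hf : ∀ n, ‖f n‖ = 1)
    (hnorm : Tendsto (fun n => ‖T (f n)‖) atTop (nhds ‖T‖))
    (g : H) (hg : g ≠ 0)
    (hweak : ∀ y : H, Tendsto (fun n => ⟪y, f n⟫_ℂ) atTop (nhds ⟪y, g⟫_ℂ)) :
    ‖T g‖ = ‖T‖ * ‖g‖ := by
  set S := ‖T‖ with hS
  have hS0 : 0 ≤ S := norm_nonneg T
  set A := (ContinuousLinearMap.adjoint T).comp T with hA
  have hAinner : ∀ x : H, ⟪A x, x⟫_ℂ = ((‖T x‖ : ℂ))^2 := by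
    intro x
    simp [hA, ContinuousLinearMap.adjoint_inner_left, inner_self_eq_norm_sq_to_K]
  have hAnorm : ‖A‖ ≤ S^2 := by
    rw [hA, ContinuousLinearMap.norm_adjoint_comp_self, sq]
  -- strong convergence of A fₙ - S² fₙ to 0
  have hsqle : ∀ n, ‖A (f n) - ((S:ℂ)^2) • f n‖^2 ≤ 2*S^4 - 2*S^2*‖T (f n)‖^2 := by
    intro n
    have h1 : ‖A (f n)‖ ≤ S^2 := by
      calc ‖A (f n)‖ ≤ ‖A‖ * ‖f n‖ := A.le_opNorm _
      _ ≤ S^2 := by rw [hf n, mul_one]; exact hAnorm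
    have h2 : ‖((S:ℂ)^2) • f n‖^2 = S^4 := by
      rw [norm_smul, hf n, mul_one]
      simp [abs_of_nonneg (sq_nonneg S)]
      ring
    have h3 : RCLike.re ⟪A (f n), ((S:ℂ)^2) • f n⟫_ℂ = S^2 * ‖T (f n)‖^2 := by
      rw [inner_smul_right, hAinner]
      simp [← Complex.ofReal_pow, ← Complex.ofReal_mul]
    rw [@norm_sub_sq ℂ, h3, h2]
    have h1' : ‖A (f n)‖^2 ≤ S^4 := by
      have := pow_le_pow_left₀ (norm_nonneg _) h1 2
      calc ‖A (f n)‖^2 ≤ (S^2)^2 := this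
      _ = S^4 := by ring
    nlinarith
  have hrhs : Tendsto (fun n => 2*S^4 - 2*S^2*‖T (f n)‖^2) atTop (nhds 0) := by
    have h0 : (0:ℝ) = 2*S^4 - 2*S^2*(S^2) := by ring
    rw [h0]
    exact tendsto_const_nhds.sub (tendsto_const_nhds.mul (hnorm.pow 2))
  have hsq0 : Tendsto (fun n => ‖A (f n) - ((S:ℂ)^2) • f n‖^2) atTop (nhds 0) :=
    squeeze_zero (fun n => sq_nonneg _) hsqle hrhs
  have hstrong : Tendsto (fun n => ‖A (f n) - ((S:ℂ)^2) • f n‖) atTop (nhds 0) := by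
    have := hsq0.sqrt
    simpa [Real.sqrt_sq (norm_nonneg _)] using this
  -- identify weak limit: A g = S² g
  have hAg : A g = ((S:ℂ)^2) • g := by
    have key : ∀ y : H, ⟪y, A g⟫_ℂ = ((S:ℂ)^2) * ⟪y, g⟫_ℂ := by
      intro y
      have lim1 : Tendsto (fun n => ⟪y, A (f n)⟫_ℂ) atTop (nhds ⟪y, A g⟫_ℂ) := by
        have := hweak (ContinuousLinearMap.adjoint A y)
        simpa [ContinuousLinearMap.adjoint_inner_left] using this
      have lim2 : Tendsto (fun n => ⟪y, A (f n)⟫_ℂ) atTop (nhds (((S:ℂ)^2) * ⟪y, g⟫_ℂ)) := by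
        have l1 : Tendsto (fun n => ⟪y, A (f n) - ((S:ℂ)^2) • f n⟫_ℂ) atTop (nhds 0) := by
          rw [tendsto_zero_iff_norm_tendsto_zero]
          apply squeeze_zero (fun n => norm_nonneg _)
            (fun n => norm_inner_le_norm y _)
          simpa using tendsto_const_nhds.mul hstrong
        have l2 : Tendsto (fun n => ((S:ℂ)^2) * ⟪y, f n⟫_ℂ) atTop
            (nhds (((S:ℂ)^2) * ⟪y, g⟫_ℂ)) := tendsto_const_nhds.mul (hweak y)
        have := l1.add l2
        simp only [zero_add] at this
        apply this.congr
        intro n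
        rw [← inner_smul_right]
        rw [← inner_add_right]
        congr 1
        abel
      exact tendsto_nhds_unique lim1 lim2
    have : ∀ y : H, ⟪y, A g - ((S:ℂ)^2) • g⟫_ℂ = 0 := by
      intro y
      rw [inner_sub_right, inner_smul_right, key]
      ring
    have h0 := this (A g - ((S:ℂ)^2) • g)
    rw [inner_self_eq_zero] at h0
    exact sub_eq_zero.mp h0
  -- conclude
  have hTg : (‖T g‖ : ℂ)^2 = ((S:ℂ)^2) * (‖g‖ : ℂ)^2 := by
    rw [← hAinner g, hAg, inner_smul_left, inner_self_eq_norm_sq_to_K]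
    simp [Complex.conj_ofReal]
  have hreal : ‖T g‖^2 = S^2 * ‖g‖^2 := by
    exact_mod_cast hTg
  nlinarith [norm_nonneg (T g), norm_nonneg g, mul_nonneg hS0 (norm_nonneg g)]
end

section
/- Let T, A be bounded linear operators on a complex Hilbert space H. Suppose ‖T‖ ≤ ‖T - μA‖ for all complex μ (minimal-norm translation of T in the direction of A is T itself). Suppose {fₙ} is a sequence of unit vectors with ‖Tfₙ‖ → ‖T‖ and (Tfₙ, Afₙ)/(Afₙ, Afₙ) → 0 (with Afₙ ≠ 0), and fₙ ⇀ f weakly with f ≠ 0. Then ‖Tf‖²/‖f‖² = ‖T‖². -/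
open scoped InnerProductSpace
open Filter Topology

/-!
Weak convergence `fₙ ⇀ g` makes `‖fₙ - g‖² - ‖fₙ‖²` tend to `-‖g‖²`, and likewise for `T fₙ ⇀ T g`.
Passing to the limit in `‖T (fₙ - g)‖² ≤ ‖T‖² ‖fₙ - g‖²` with `‖fₙ‖ → 1`, `‖T fₙ‖ → ‖T‖` gives
`‖T‖² - ‖T g‖² ≤ ‖T‖² (1 - ‖g‖²)`, i.e. `T` attains its norm at `g`.
-/

section

variable {𝕜 E F : Type*} [RCLike 𝕜]
  [NormedAddCommGroup E] [InnerProductSpace 𝕜 E] [NormedAddCommGroup F] [InnerProductSpace 𝕜 F]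

theorem tendsto_norm_sub_sq_sub_norm_sq {ι : Type*} {l : Filter ι} {x : ι → E} {x₀ : E}
    (hweak : ∀ y : E, Tendsto (fun n => ⟪y, x n⟫_𝕜) l (𝓝 ⟪y, x₀⟫_𝕜)) :
    Tendsto (fun n => ‖x n - x₀‖ ^ 2 - ‖x n‖ ^ 2) l (𝓝 (-‖x₀‖ ^ 2)) := by
  have hre : Tendsto (fun n => RCLike.re ⟪x₀, x n⟫_𝕜) l (𝓝 (‖x₀‖ ^ 2)) := by
    rw [← inner_self_eq_norm_sq (𝕜 := 𝕜)]
    exact (RCLike.continuous_re.tendsto _).comp (hweak x₀)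
  have hexpand : ∀ n, ‖x n - x₀‖ ^ 2 - ‖x n‖ ^ 2 = ‖x₀‖ ^ 2 - 2 * RCLike.re ⟪x₀, x n⟫_𝕜 := by
    intro n
    rw [norm_sub_sq (𝕜 := 𝕜), inner_re_symm]
    ring
  simp_rw [hexpand]
  convert tendsto_const_nhds.sub (hre.const_mul 2) using 2
  ring

variable [CompleteSpace E] [CompleteSpace F]

theorem ContinuousLinearMap.tendsto_inner_apply {ι : Type*} {l : Filter ι} (T : E →L[𝕜] F)
    {x : ι → E} {x₀ : E} (hweak : ∀ y : E, Tendsto (fun n => ⟪y, x n⟫_𝕜) l (𝓝 ⟪y, x₀⟫_𝕜))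
    (z : F) : Tendsto (fun n => ⟪z, T (x n)⟫_𝕜) l (𝓝 ⟪z, T x₀⟫_𝕜) := by
  simpa only [ContinuousLinearMap.adjoint_inner_left] using hweak (ContinuousLinearMap.adjoint T z)

theorem ContinuousLinearMap.norm_apply_eq_of_tendsto_inner (T : E →L[𝕜] F) {f : ℕ → E} {g : E}
    (hf : Tendsto (fun n => ‖f n‖) atTop (𝓝 1))
    (hT : Tendsto (fun n => ‖T (f n)‖) atTop (𝓝 ‖T‖))
    (hweak : ∀ y : E, Tendsto (fun n => ⟪y, f n⟫_𝕜) atTop (𝓝 ⟪y, g⟫_𝕜)) :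
    ‖T g‖ = ‖T‖ * ‖g‖ := by
  have hbound : ∀ n, ‖T (f n)‖ ^ 2 + (‖T (f n) - T g‖ ^ 2 - ‖T (f n)‖ ^ 2)
      ≤ ‖T‖ ^ 2 * (‖f n‖ ^ 2 + (‖f n - g‖ ^ 2 - ‖f n‖ ^ 2)) := by
    intro n
    rw [add_sub_cancel, add_sub_cancel, ← map_sub, ← mul_pow]
    exact pow_le_pow_left₀ (norm_nonneg _) (T.le_opNorm _) 2
  have hlim : ‖T‖ ^ 2 + -‖T g‖ ^ 2 ≤ ‖T‖ ^ 2 * (1 ^ 2 + -‖g‖ ^ 2) :=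
    le_of_tendsto_of_tendsto' ((hT.pow 2).add (tendsto_norm_sub_sq_sub_norm_sq
      (T.tendsto_inner_apply hweak))) (((hf.pow 2).add
      (tendsto_norm_sub_sq_sub_norm_sq hweak)).const_mul _) hbound
  refine le_antisymm (T.le_opNorm g) ?_
  rw [← pow_le_pow_iff_left₀ (by positivity) (norm_nonneg _) two_ne_zero]
  linarith

end

theorem stmt_9_general {H : Type*} [NormedAddCommGroup H] [InnerProductSpace ℂ H] [CompleteSpace H]
    (T : H →L[ℂ] H)
    (f : ℕ → H) (hf : ∀ n, ‖f n‖ = 1)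
    (hnorm : Tendsto (fun n => ‖T (f n)‖) atTop (nhds ‖T‖))
    (g : H) (hg : g ≠ 0)
    (hweak : ∀ y : H, Tendsto (fun n => ⟪y, f n⟫_ℂ) atTop (nhds ⟪y, g⟫_ℂ)) :
    ‖T g‖ ^ 2 / ‖g‖ ^ 2 = ‖T‖ ^ 2 := by
  have hunit : Tendsto (fun n => ‖f n‖) atTop (𝓝 1) := by simp only [hf, tendsto_const_nhds]
  have hg' : ‖g‖ ^ 2 ≠ 0 := pow_ne_zero 2 (norm_ne_zero_iff.mpr hg)
  rw [T.norm_apply_eq_of_tendsto_inner hunit hnorm hweak, mul_pow, mul_div_cancel_right₀ _ hg']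

/-- core step in Theorem 3 of the paper. -/
theorem stmt_9 {H : Type*} [NormedAddCommGroup H] [InnerProductSpace ℂ H] [CompleteSpace H]
    (T A : H →L[ℂ] H)
    (c : ℝ) (hc : 0 < c) (hA : ∀ x : H, c * ‖x‖ ≤ ‖A x‖)
    (hmin : ∀ μ : ℂ, ‖T‖ ≤ ‖T - μ • A‖)
    (f : ℕ → H) (hf : ∀ n, ‖f n‖ = 1)
    (hnorm : Tendsto (fun n => ‖T (f n)‖) atTop (nhds ‖T‖))
    (hlam : Tendsto (fun n => ⟪A (f n), T (f n)⟫_ℂ / ⟪A (f n), A (f n)⟫_ℂ) atTop (nhds 0))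
    (g : H) (hg : g ≠ 0)
    (hweak : ∀ y : H, Tendsto (fun n => ⟪y, f n⟫_ℂ) atTop (nhds ⟪y, g⟫_ℂ)) :
    ‖T g‖ ^ 2 / ‖g‖ ^ 2 = ‖T‖ ^ 2 :=
  stmt_9_general T f hf hnorm g hg hweak
end

section
/- Let T, A be bounded linear operators on a complex Hilbert space H with 0 not an approximate eigenvalue of A, and suppose ‖T‖ ≤ ‖T - μA‖ for all μ ∈ ℂ and M_T(A) = ‖T‖ where M_T(A) = sup_{‖f‖=1}(‖Tf‖² - |(Tf,Af)|²/‖Af‖²)^{1/2}. Then ‖T‖² = sup{ g(T*T) - |g(A*T)|²/g(A*A) : g a state on B(H) with g(A*A) ≠ 0 }. -/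
/-!
Every unit vector `f` gives the vector state `U ↦ ⟪f, U f⟫`, at which the state expression
`g(T*T) - |g(A*T)|² / g(A*A)` is exactly the quantity `‖Tf‖² - |⟪Af, Tf⟫|² / ‖Af‖²` in `M_T(A)`;
as `A` is bounded below, `g(A*A) = ‖Af‖² ≠ 0`. So the supremum over states is at least
`M_T(A)² = ‖T‖²`. Conversely every state value is at most `g(T*T) ≤ ‖T*T‖ = ‖T‖²`.
-/

open scoped InnerProductSpace
open ContinuousLinearMap

/-- The translatable radius M_T(A). -/
noncomputable def MTA {H : Type*} [NormedAddCommGroup H] [InnerProductSpace ℂ H]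
    (T A : H →L[ℂ] H) : ℝ :=
  sSup {r : ℝ | ∃ f : H, ‖f‖ = 1 ∧
    r = Real.sqrt (‖T f‖ ^ 2 - ‖⟪A f, T f⟫_ℂ‖ ^ 2 / ‖A f‖ ^ 2)}

namespace ContinuousLinearMap

variable {H : Type*} [NormedAddCommGroup H] [InnerProductSpace ℂ H]

/-- The squared distance from `T f` to the line `ℂ • A f`; for `A f = 0` the division by zero
correctly gives `‖T f‖²`. -/
noncomputable def orthNormSq (T A : H →L[ℂ] H) (f : H) : ℝ :=
  ‖T f‖ ^ 2 - ‖⟪A f, T f⟫_ℂ‖ ^ 2 / ‖A f‖ ^ 2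

theorem orthNormSq_nonneg (T A : H →L[ℂ] H) (f : H) : 0 ≤ orthNormSq T A f := by
  refine sub_nonneg.2 (div_le_of_le_mul₀ (by positivity) (by positivity) ?_)
  calc ‖⟪A f, T f⟫_ℂ‖ ^ 2 ≤ (‖A f‖ * ‖T f‖) ^ 2 := by gcongr; exact norm_inner_le_norm _ _
    _ = ‖T f‖ ^ 2 * ‖A f‖ ^ 2 := by ring

theorem orthNormSq_le_norm_sq (T A : H →L[ℂ] H) {f : H} (hf : ‖f‖ ≤ 1) :
    orthNormSq T A f ≤ ‖T‖ ^ 2 := by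
  have hTf : ‖T f‖ ≤ ‖T‖ := T.le_of_opNorm_le_of_le le_rfl hf |>.trans_eq (mul_one _)
  have : 0 ≤ ‖⟪A f, T f⟫_ℂ‖ ^ 2 / ‖A f‖ ^ 2 := by positivity
  unfold orthNormSq
  nlinarith [norm_nonneg (T f)]

noncomputable def vectorState (f : H) : (H →L[ℂ] H) →L[ℂ] ℂ :=
  (innerSL ℂ f).comp (apply ℂ H f)

@[simp]
theorem vectorState_apply (f : H) (U : H →L[ℂ] H) : vectorState f U = ⟪f, U f⟫_ℂ := rfl

theorem vectorState_one (f : H) : vectorState f 1 = ((‖f‖ ^ 2 : ℝ) : ℂ) := by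
  rw [vectorState_apply, one_apply_eq_self, inner_self_eq_norm_sq_to_K]
  norm_cast

theorem norm_vectorState (f : H) : ‖vectorState f‖ = ‖f‖ ^ 2 := by
  refine le_antisymm (opNorm_le_bound _ (by positivity) fun U => ?_) ?_
  · calc ‖⟪f, U f⟫_ℂ‖ ≤ ‖f‖ * (‖U‖ * ‖f‖) :=
          (norm_inner_le_norm _ _).trans (by gcongr; exact U.le_opNorm f)
      _ = ‖f‖ ^ 2 * ‖U‖ := by ring
  · calc ‖f‖ ^ 2 = ‖vectorState f 1‖ := by
          rw [vectorState_one, Complex.norm_real, Real.norm_of_nonneg (by positivity)]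
      _ ≤ ‖vectorState f‖ * ‖(1 : H →L[ℂ] H)‖ := le_opNorm _ _
      _ ≤ ‖vectorState f‖ := mul_le_of_le_one_right (opNorm_nonneg _) norm_id_le

variable [CompleteSpace H]

theorem vectorState_adjoint_mul (f : H) (U V : H →L[ℂ] H) :
    vectorState f (adjoint U * V) = ⟪U f, V f⟫_ℂ :=
  adjoint_inner_right U f (V f)

theorem vectorState_adjoint_mul_self (f : H) (U : H →L[ℂ] H) :
    vectorState f (adjoint U * U) = ((‖U f‖ ^ 2 : ℝ) : ℂ) := by
  rw [vectorState_adjoint_mul, inner_self_eq_norm_sq_to_K]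
  norm_cast

noncomputable def stateOrthNormSq (T A : H →L[ℂ] H) (g : (H →L[ℂ] H) →L[ℂ] ℂ) : ℝ :=
  (g (adjoint T * T)).re - ‖g (adjoint A * T)‖ ^ 2 / (g (adjoint A * A)).re

theorem stateOrthNormSq_vectorState (T A : H →L[ℂ] H) (f : H) :
    stateOrthNormSq T A (vectorState f) = orthNormSq T A f := by
  rw [stateOrthNormSq, orthNormSq, vectorState_adjoint_mul_self, vectorState_adjoint_mul_self,
    vectorState_adjoint_mul, Complex.ofReal_re, Complex.ofReal_re]

theorem stateOrthNormSq_le_norm_sq (T A : H →L[ℂ] H) {g : (H →L[ℂ] H) →L[ℂ] ℂ}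
    (hg : ‖g‖ ≤ 1) (hA : 0 ≤ (g (adjoint A * A)).re) : stateOrthNormSq T A g ≤ ‖T‖ ^ 2 := by
  have hT : (g (adjoint T * T)).re ≤ ‖T‖ ^ 2 :=
    calc (g (adjoint T * T)).re ≤ ‖g (adjoint T * T)‖ := Complex.re_le_norm _
      _ ≤ ‖adjoint T * T‖ := g.le_of_opNorm_le_of_le hg le_rfl |>.trans_eq (one_mul _)
      _ = ‖T‖ ^ 2 := (norm_adjoint_comp_self T).trans (sq _).symm
  have : 0 ≤ ‖g (adjoint A * T)‖ ^ 2 / (g (adjoint A * A)).re := by positivity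
  rw [stateOrthNormSq]
  linarith

variable (T A : H →L[ℂ] H)

def stateOrthNormSqSet : Set ℝ :=
  {r | ∃ g : (H →L[ℂ] H) →L[ℂ] ℂ,
    (∀ U : H →L[ℂ] H, ∃ s : ℝ, 0 ≤ s ∧ g (adjoint U * U) = (s : ℂ)) ∧
    g 1 = 1 ∧ ‖g‖ = 1 ∧ g (adjoint A * A) ≠ 0 ∧ r = stateOrthNormSq T A g}

theorem le_norm_sq_of_mem_stateOrthNormSqSet {r : ℝ} (hr : r ∈ stateOrthNormSqSet T A) :
    r ≤ ‖T‖ ^ 2 := by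
  obtain ⟨g, hpos, -, hg, -, rfl⟩ := hr
  obtain ⟨s, hs, hgs⟩ := hpos A
  exact stateOrthNormSq_le_norm_sq T A hg.le (by rw [hgs, Complex.ofReal_re]; exact hs)

theorem orthNormSq_mem_stateOrthNormSqSet {f : H} (hf : ‖f‖ = 1) (hAf : A f ≠ 0) :
    orthNormSq T A f ∈ stateOrthNormSqSet T A := by
  refine ⟨vectorState f, fun U => ⟨_, by positivity, vectorState_adjoint_mul_self f U⟩, ?_,
    by rw [norm_vectorState, hf, one_pow], ?_, (stateOrthNormSq_vectorState T A f).symm⟩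
  · rw [vectorState_one, hf, one_pow, Complex.ofReal_one]
  · rw [vectorState_adjoint_mul_self]
    exact_mod_cast (pow_pos (norm_pos_iff.2 hAf) 2).ne'

theorem stateOrthNormSqSet_eq_empty [Subsingleton H] : stateOrthNormSqSet T A = ∅ := by
  refine Set.eq_empty_of_forall_notMem ?_
  rintro r ⟨g, -, hg1, -⟩
  rw [Subsingleton.elim (1 : H →L[ℂ] H) 0, map_zero] at hg1
  exact zero_ne_one hg1

end ContinuousLinearMap

theorem MTA_sq_eq_sSup {H : Type*} [NormedAddCommGroup H] [InnerProductSpace ℂ H] [Nontrivial H]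
    (T A : H →L[ℂ] H) : MTA T A ^ 2 = sSup (T.orthNormSq A '' Metric.sphere 0 1) := by
  have hne : (T.orthNormSq A '' Metric.sphere 0 1).Nonempty :=
    (NormedSpace.sphere_nonempty.2 zero_le_one).image _
  have hbdd : BddAbove (T.orthNormSq A '' Metric.sphere 0 1) :=
    ⟨‖T‖ ^ 2, Set.forall_mem_image.2 fun f hf =>
      T.orthNormSq_le_norm_sq A (mem_sphere_zero_iff_norm.1 hf).le⟩
  have hMTA : MTA T A = sSup (Real.sqrt '' (T.orthNormSq A '' Metric.sphere 0 1)) := by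
    rw [Set.image_image, MTA]
    congr 1
    ext r
    simp only [Set.mem_ofPred_eq, Set.mem_image, mem_sphere_zero_iff_norm, orthNormSq, eq_comm]
  rw [hMTA, ← Monotone.map_csSup_of_continuousAt Real.continuous_sqrt.continuousAt
    (fun _ _ => Real.sqrt_le_sqrt) hne hbdd, Real.sq_sqrt]
  exact Real.sSup_nonneg (Set.forall_mem_image.2 fun f _ => T.orthNormSq_nonneg A f)

theorem stmt_14_general {H : Type*} [NormedAddCommGroup H] [InnerProductSpace ℂ H] [CompleteSpace H]
    (T A : H →L[ℂ] H)
    (c : ℝ) (hc : 0 < c) (hA : ∀ x : H, c * ‖x‖ ≤ ‖A x‖)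
    (hM : MTA T A = ‖T‖) :
    ‖T‖ ^ 2 = sSup {r : ℝ | ∃ g : (H →L[ℂ] H) →L[ℂ] ℂ,
      (∀ U : H →L[ℂ] H, ∃ s : ℝ, 0 ≤ s ∧ g (adjoint U * U) = (s : ℂ)) ∧
      g 1 = 1 ∧ ‖g‖ = 1 ∧ g (adjoint A * A) ≠ 0 ∧
      r = (g (adjoint T * T)).re
            - ‖g (adjoint A * T)‖ ^ 2 / (g (adjoint A * A)).re} := by
  change ‖T‖ ^ 2 = sSup (T.stateOrthNormSqSet A)
  rcases subsingleton_or_nontrivial H with hH | hH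
  · simp [Subsingleton.elim T 0, stateOrthNormSqSet_eq_empty]
  have hle : ∀ r ∈ T.stateOrthNormSqSet A, r ≤ ‖T‖ ^ 2 := fun _ =>
    T.le_norm_sq_of_mem_stateOrthNormSqSet A
  refine le_antisymm ?_ (Real.sSup_le hle (sq_nonneg _))
  rw [← hM, MTA_sq_eq_sSup]
  refine csSup_le_csSup ⟨_, hle⟩ ((NormedSpace.sphere_nonempty.2 zero_le_one).image _) ?_
  rintro _ ⟨f, hf, rfl⟩
  rw [mem_sphere_zero_iff_norm] at hf
  have hAf : A f ≠ 0 := norm_pos_iff.1 (by nlinarith [hA f])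
  exact T.orthNormSq_mem_stateOrthNormSqSet A hf hAf

/-- Williams-type formula for ‖T‖² via states, assuming M_T(A) = ‖T‖. -/
theorem stmt_14 {H : Type*} [NormedAddCommGroup H] [InnerProductSpace ℂ H] [CompleteSpace H]
    (T A : H →L[ℂ] H)
    (c : ℝ) (hc : 0 < c) (hA : ∀ x : H, c * ‖x‖ ≤ ‖A x‖)
    (hmin : ∀ μ : ℂ, ‖T‖ ≤ ‖T - μ • A‖)
    (hM : MTA T A = ‖T‖) :
    ‖T‖ ^ 2 = sSup {r : ℝ | ∃ g : (H →L[ℂ] H) →L[ℂ] ℂ,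
      (∀ U : H →L[ℂ] H, ∃ s : ℝ, 0 ≤ s ∧ g (adjoint U * U) = (s : ℂ)) ∧
      g 1 = 1 ∧ ‖g‖ = 1 ∧ g (adjoint A * A) ≠ 0 ∧
      r = (g (adjoint T * T)).re
            - ‖g (adjoint A * T)‖ ^ 2 / (g (adjoint A * A)).re} :=
  stmt_14_general T A c hc hA hM
end
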